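/- For every real t there exists an angle θ ∈ ℝ such that all three vertices P₁(t), P₂(t), P₃(t) lie on the ellipse centered at X₁ = (2d, 0) obtained by rotating {(u, v) : u²/(R + d)² + v²/(R − d)² = 1} by θ; explicitly, for each i, writing uᵢ = cos θ·(Pᵢ(t)ₓ − 2d) + sin θ·Pᵢ(t)_y and vᵢ = −sin θ·(Pᵢ(t)ₓ − 2d) + cos θ·Pᵢ(t)_y, one has uᵢ²/(R + d)² + vᵢ²/(R − d)² = 1. In particular the circumconic of the poristic triangle centered at the incenter has semiaxis lengths R + d and R − d, independent of t. -/

import Mathlib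

noncomputable section

/-- Inradius determined by Euler's relation: `r = (R² − d²)/(2R)`. -/
def rIn (R d : ℝ) : ℝ := (R ^ 2 - d ^ 2) / (2 * R)

/-- `ω = √(R² − (d cos t + r)²)`. -/
def om (R d t : ℝ) : ℝ := Real.sqrt (R ^ 2 - (d * Real.cos t + rIn R d) ^ 2)

/-- Vertices `P₁(t), P₂(t), P₃(t)` of the poristic triangle
(circumcircle centered at `X₃ = (d,0)` with radius `R`,
incircle centered at `X₁ = (2d,0)` with radius `r`). -/
def Pv (R d t : ℝ) : Fin 3 → ℝ × ℝ :=
  ![(Real.cos t * (d * Real.cos t + rIn R d) - om R d t * Real.sin t + d,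
     (d * Real.cos t + rIn R d) * Real.sin t + om R d t * Real.cos t),
    (Real.cos t * (d * Real.cos t + rIn R d) + om R d t * Real.sin t + d,
     (d * Real.cos t + rIn R d) * Real.sin t - om R d t * Real.cos t),
    (R * (2 * d * R - (R ^ 2 + d ^ 2) * Real.cos t) /
       (R ^ 2 - 2 * d * R * Real.cos t + d ^ 2) + d,
     R * (d ^ 2 - R ^ 2) * Real.sin t /
       (R ^ 2 - 2 * d * R * Real.cos t + d ^ 2))]

/-- Coefficient of `x` in the excentral sideline `ℓᵢ'(t)`. -/
def lineA (R d t : ℝ) : Fin 3 → ℝ :=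
  ![(d * Real.sin t - om R d t) * Real.sin t - rIn R d * Real.cos t,
    (d * Real.sin t + om R d t) * Real.sin t - rIn R d * Real.cos t,
    R * Real.cos t - d]

/-- Coefficient of `y` in the excentral sideline `ℓᵢ'(t)`. -/
def lineB (R d t : ℝ) : Fin 3 → ℝ :=
  ![-((d * Real.cos t + rIn R d) * Real.sin t - om R d t * Real.cos t),
    -((d * Real.cos t + rIn R d) * Real.sin t + om R d t * Real.cos t),
    R * Real.sin t]

/-- Constant coefficient in the excentral sideline `ℓᵢ'(t)`. -/
def lineC (R d t : ℝ) : Fin 3 → ℝ :=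
  ![R ^ 2 - d ^ 2, R ^ 2 - d ^ 2, -(2 * d * R * Real.cos t) + R ^ 2 + d ^ 2]

/-!
With `a = R + d`, `b = R - d` and `z = x + i y` measured from the incenter, the ellipse of the
statement is `(R² + d²)|z|² - 2dR Re(e^{-2iθ} z²) = (R² - d²)²`. Choose
`2θ = t + 2 arg (R e^{it} - d)`, so that `e^{2iθ}` is proportional to `e^{it} (R e^{it} - d)²`;
the equation then becomes polynomial in `cos t`, `sin t` and the vertex. The vertices `P₁`, `P₂`
are the points of the circumcircle on the tangent to the incircle at `X₁ + r e^{it}`, and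
`P₃ - X₁ = -(R² - d²) e^{it} / (R - d e^{it})`, for which `Re(e^{-2iθ} z²)` is a multiple of
`cos t`. In each case the equation lies in the ideal generated by these relations.
-/

open Real

/-- With `(C, S) = k (cos 2θ, sin 2θ)`, `ellipseForm a b k C S x y = 2 a² b² k` is the ellipse
`u²/a² + v²/b² = 1` rotated by `θ`; the scale `k` allows a polynomial choice of `(C, S)`. -/
def ellipseForm (a b k C S x y : ℝ) : ℝ :=
  (a ^ 2 + b ^ 2) * (x ^ 2 + y ^ 2) * k - (a ^ 2 - b ^ 2) * (C * (x ^ 2 - y ^ 2) + S * (2 * x * y))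

theorem rotated_ellipse_eq_one_iff {a b k : ℝ} (ha : a ≠ 0) (hb : b ≠ 0) (hk : k ≠ 0) (θ x y : ℝ) :
    (cos θ * x + sin θ * y) ^ 2 / a ^ 2 + (-sin θ * x + cos θ * y) ^ 2 / b ^ 2 = 1 ↔
      ellipseForm a b k (k * cos (2 * θ)) (k * sin (2 * θ)) x y = 2 * a ^ 2 * b ^ 2 * k := by
  have key : ellipseForm a b k (k * cos (2 * θ)) (k * sin (2 * θ)) x y - 2 * a ^ 2 * b ^ 2 * k =
      2 * k * ((cos θ * x + sin θ * y) ^ 2 * b ^ 2 + a ^ 2 * (-sin θ * x + cos θ * y) ^ 2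
        - a ^ 2 * b ^ 2) := by
    rw [ellipseForm, cos_two_mul, sin_two_mul]
    linear_combination (-2 * k * (a ^ 2 * x ^ 2 + b ^ 2 * y ^ 2)) * sin_sq_add_cos_sq θ
  rw [div_add_div _ _ (pow_ne_zero 2 ha) (pow_ne_zero 2 hb), div_eq_one_iff_eq (by positivity),
    ← sub_eq_zero, ← sub_eq_zero (a := ellipseForm _ _ _ _ _ _ _), key]
  simp [hk]

theorem norm_sq_mul_cos_add_two_mul_arg (t : ℝ) (w : ℂ) :
    ‖w‖ ^ 2 * cos (t + 2 * w.arg) = cos t * (w.re ^ 2 - w.im ^ 2) - sin t * (2 * w.re * w.im) := by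
  rw [cos_add, cos_two_mul, sin_two_mul, ← Complex.norm_mul_cos_arg, ← Complex.norm_mul_sin_arg]
  linear_combination (‖w‖ ^ 2 * cos t) * sin_sq_add_cos_sq w.arg

theorem norm_sq_mul_sin_add_two_mul_arg (t : ℝ) (w : ℂ) :
    ‖w‖ ^ 2 * sin (t + 2 * w.arg) = sin t * (w.re ^ 2 - w.im ^ 2) + cos t * (2 * w.re * w.im) := by
  rw [sin_add, cos_two_mul, sin_two_mul, ← Complex.norm_mul_cos_arg, ← Complex.norm_mul_sin_arg]
  linear_combination (‖w‖ ^ 2 * sin t) * sin_sq_add_cos_sq w.arg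

/-- `(c, s) = (cos t, sin t)`, `(x, y)` is measured from the incenter, and the direction
`(C, S) = e^{it} (R e^{it} - d)²` has length `k = |R e^{it} - d|²`. -/
def OnIncenterConic (R d c s x y : ℝ) : Prop :=
  ellipseForm (R + d) (R - d) (R ^ 2 - 2 * d * R * c + d ^ 2)
      (c * ((R * c - d) ^ 2 - (R * s) ^ 2) - s * (2 * (R * c - d) * (R * s)))
      (s * ((R * c - d) ^ 2 - (R * s) ^ 2) + c * (2 * (R * c - d) * (R * s))) x y =
    2 * (R + d) ^ 2 * (R - d) ^ 2 * (R ^ 2 - 2 * d * R * c + d ^ 2)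

theorem onIncenterConic_of_mem_circle_of_mem_tangent {R d r c s x y : ℝ}
    (hcs : c ^ 2 + s ^ 2 = 1) (hr : 2 * R * r = R ^ 2 - d ^ 2)
    (hcirc : (x + d) ^ 2 + y ^ 2 = R ^ 2) (htan : c * x + s * y = r) :
    OnIncenterConic R d c s x y := by
  unfold OnIncenterConic ellipseForm
  grind

/-- In complex form the hypotheses say `(x + i y) (R - d e^{it}) = -(R² - d²) e^{it}`. -/
theorem onIncenterConic_of_apex {R d c s x y : ℝ} (hcs : c ^ 2 + s ^ 2 = 1)
    (hre : x * (R - d * c) + y * (d * s) = -(R ^ 2 - d ^ 2) * c)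
    (him : y * (R - d * c) - x * (d * s) = -(R ^ 2 - d ^ 2) * s) :
    OnIncenterConic R d c s x y := by
  unfold OnIncenterConic ellipseForm
  grind

theorem two_mul_mul_rIn {R : ℝ} (hR : R ≠ 0) (d : ℝ) : 2 * R * rIn R d = R ^ 2 - d ^ 2 := by
  rw [rIn]
  field_simp

theorem om_sq {R d : ℝ} (hR : 0 < R) (hdR : |d| ≤ R) (t : ℝ) :
    om R d t ^ 2 = R ^ 2 - (d * cos t + rIn R d) ^ 2 := by
  have hr := two_mul_mul_rIn hR.ne' d
  have hdc : |d * cos t| ≤ |d| := by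
    rw [abs_mul]
    exact mul_le_of_le_one_right (abs_nonneg d) (abs_cos_le_one t)
  have hd2 : d ^ 2 = |d| ^ 2 := (sq_abs d).symm
  have hr0 : 0 ≤ rIn R d := by nlinarith [abs_nonneg d]
  have hrR : |d| + rIn R d ≤ R := by nlinarith [sq_nonneg (R - |d|)]
  obtain ⟨hlo, hhi⟩ := abs_le.1 hdc
  exact Real.sq_sqrt (sub_nonneg.2 (sq_le_sq' (by linarith) (by linarith)))

theorem sq_sub_two_mul_mul_cos_add_sq_pos {R d : ℝ} (hdR : |d| < R) (t : ℝ) :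
    0 < R ^ 2 - 2 * d * R * cos t + d ^ 2 := by
  have hdc : d * cos t ≤ |d| := (le_abs_self _).trans <| by
    rw [abs_mul]
    exact mul_le_of_le_one_right (abs_nonneg d) (abs_cos_le_one t)
  nlinarith [sq_pos_of_pos (sub_pos.2 hdR), sq_abs d, abs_nonneg d]

theorem onIncenterConic_Pv {R d : ℝ} (hdR : |d| < R) (t : ℝ) (i : Fin 3) :
    OnIncenterConic R d (cos t) (sin t) ((Pv R d t i).1 - 2 * d) (Pv R d t i).2 := by
  have hR : 0 < R := (abs_nonneg d).trans_lt hdR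
  have hcs := cos_sq_add_sin_sq t
  have hr := two_mul_mul_rIn hR.ne' d
  have hω := om_sq hR hdR.le t
  fin_cases i
  · apply onIncenterConic_of_mem_circle_of_mem_tangent hcs hr <;>
      simp only [Pv, Fin.zero_eta, Matrix.cons_val_zero]
    · linear_combination ((d * cos t + rIn R d) ^ 2 + om R d t ^ 2) * hcs + hω
    · linear_combination (d * cos t + rIn R d) * hcs
  · apply onIncenterConic_of_mem_circle_of_mem_tangent hcs hr <;>
      simp only [Pv, Fin.mk_one, Matrix.cons_val_one, Matrix.cons_val_zero]
    · linear_combination ((d * cos t + rIn R d) ^ 2 + om R d t ^ 2) * hcs + hω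
    · linear_combination (d * cos t + rIn R d) * hcs
  · have hD := (sq_sub_two_mul_mul_cos_add_sq_pos hdR t).ne'
    simp only [Pv, Fin.reduceFinMk, Matrix.cons_val_two, Matrix.tail_cons, Matrix.head_cons]
    generalize hD_def : R ^ 2 - 2 * d * R * cos t + d ^ 2 = D at hD ⊢
    apply onIncenterConic_of_apex hcs
    · field_simp
      linear_combination (R * d - R ^ 2 * cos t) * hD_def - R * d * (R ^ 2 - d ^ 2) * hcs
    · field_simp
      linear_combination (-sin t * R ^ 2) * hD_def

/-- the three poristic vertices lie on an ellipse centered at the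
incenter `X₁ = (2d,0)`, obtained by rotating the ellipse with semiaxes
`R + d` and `R − d` by some angle `θ`. -/
theorem incenter_circumconic_axes (R d : ℝ) (hd : 0 < d) (hdR : d < R) (t : ℝ) :
    ∃ θ : ℝ, ∀ i : Fin 3,
      (Real.cos θ * ((Pv R d t i).1 - 2 * d) + Real.sin θ * (Pv R d t i).2) ^ 2
          / (R + d) ^ 2
        + (-Real.sin θ * ((Pv R d t i).1 - 2 * d) + Real.cos θ * (Pv R d t i).2) ^ 2
          / (R - d) ^ 2 = 1 := by
  have hdR' : |d| < R := abs_lt.2 ⟨by linarith, hdR⟩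
  set w : ℂ := ⟨R * cos t - d, R * sin t⟩
  have hw : ‖w‖ ^ 2 = R ^ 2 - 2 * d * R * cos t + d ^ 2 := by
    rw [Complex.sq_norm, Complex.normSq_mk]
    linear_combination R ^ 2 * sin_sq_add_cos_sq t
  have hw0 : ‖w‖ ^ 2 ≠ 0 := hw ▸ (sq_sub_two_mul_mul_cos_add_sq_pos hdR' t).ne'
  refine ⟨t / 2 + w.arg, fun i => ?_⟩
  rw [rotated_ellipse_eq_one_iff (by linarith) (by linarith) hw0,
    show 2 * (t / 2 + w.arg) = t + 2 * w.arg by ring, norm_sq_mul_cos_add_two_mul_arg,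
    norm_sq_mul_sin_add_two_mul_arg, hw]
  exact onIncenterConic_Pv hdR' t i
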